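/- arXiv:1404.2861 — 5 statements merged into one kernel-verified Lean document; each statement's English description precedes it below -/
import Mathlib

section
/- The game in which each player's payoff is her Shapley value Π_t is an exact potential game: the function Φ(a) = Σ_{J ⊆ [m]} β_J · v(a_J), with β_J = (|J|−1)!·(m−|J|)!/m!, satisfies Π_t(a'_t, a_{−t}) − Π_t(a) = Φ(a'_t, a_{−t}) − Φ(a) for every profile a, player t, and deviation a'_t ∈ A_t. -/
open Finset

variable {m : ℕ}

/-- The profile where players in `J` play their strategy in `a` and the rest play null. -/
def restrictProfile {A : Fin m → Type*} (null : ∀ t, A t) (a : ∀ t, A t)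
    (J : Finset (Fin m)) : ∀ t, A t :=
  fun t => if t ∈ J then a t else null t

/-- Shapley payment of player `t` at profile `a` (subset form). -/
noncomputable def shapleySub {A : Fin m → Type*} (null : ∀ t, A t)
    (v : (∀ t, A t) → ℝ) (a : ∀ t, A t) (t : Fin m) : ℝ :=
  ∑ J ∈ (Finset.univ.erase t).powerset,
    ((J.card.factorial * (m - J.card - 1).factorial : ℝ) / (m.factorial : ℝ)) *
      (v (restrictProfile null a (insert t J)) - v (restrictProfile null a J))

/-- The potential `Φ(a) = Σ_{J ⊆ [m]} β_J v(a_J)` with `β_J = (|J|-1)! (m-|J|)! / m!`. -/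
noncomputable def shapleyPotential {A : Fin m → Type*} (null : ∀ t, A t)
    (v : (∀ t, A t) → ℝ) (a : ∀ t, A t) : ℝ :=
  ∑ J ∈ (Finset.univ : Finset (Fin m)).powerset,
    (((J.card - 1).factorial * (m - J.card).factorial : ℝ) / (m.factorial : ℝ)) *
      v (restrictProfile null a J)

lemma restrict_update_not_mem {A : Fin m → Type*} (null : ∀ t, A t) (a : ∀ t, A t)
    (t : Fin m) (a' : A t) {J : Finset (Fin m)} (ht : t ∉ J) :
    restrictProfile null (Function.update a t a') J = restrictProfile null a J := by
  funext s
  unfold restrictProfile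
  by_cases hs : s ∈ J
  · simp [hs, Function.update_of_ne (ne_of_mem_of_not_mem hs ht)]
  · simp [hs]

/-- The game with Shapley payoffs is an exact potential game: unilateral deviation
changes every player's Shapley payoff by exactly the change in the potential `Φ`. -/
theorem shapley_exact_potential {A : Fin m → Type*} (null : ∀ t, A t)
    (v : (∀ t, A t) → ℝ) (a : ∀ t, A t) (t : Fin m) (a' : A t) :
    shapleySub null v (Function.update a t a') t - shapleySub null v a t =
      shapleyPotential null v (Function.update a t a') - shapleyPotential null v a := by
  have huniv : (Finset.univ : Finset (Fin m)) = insert t (Finset.univ.erase t) := by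
    rw [Finset.insert_erase (Finset.mem_univ t)]
  have pot : ∀ b : ∀ s, A s, shapleyPotential null v b =
      ∑ K ∈ (Finset.univ.erase t).powerset,
        ((((K.card - 1).factorial * (m - K.card).factorial : ℝ) / (m.factorial : ℝ)) *
            v (restrictProfile null b K) +
          ((((insert t K).card - 1).factorial * (m - (insert t K).card).factorial : ℝ) /
              (m.factorial : ℝ)) *
            v (restrictProfile null b (insert t K))) := by
    intro b
    unfold shapleyPotential
    rw [huniv, Finset.sum_powerset_insert (Finset.notMem_erase t _),
      ← Finset.sum_add_distrib, Finset.erase_insert (Finset.notMem_erase t _)]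
  unfold shapleySub
  rw [pot, pot, ← Finset.sum_sub_distrib, ← Finset.sum_sub_distrib]
  refine Finset.sum_congr rfl fun K hK => ?_
  have htK : t ∉ K := fun h => Finset.notMem_erase t _ (Finset.mem_powerset.mp hK h)
  rw [restrict_update_not_mem null a t a' htK, Finset.card_insert_of_notMem htK]
  simp only [Nat.add_sub_cancel, Nat.sub_add_eq]
  ring
end

section
/- In any pure Nash equilibrium a of the game with Shapley payments, v(a) ≥ v(∅), where ∅ is the all-null strategy profile. -/
/-!
A player can always deviate to her null strategy, and the Shapley payment of a player playing null
is `0`; hence at a Nash equilibrium every payment is nonnegative. The payments sum to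
`v a - v ∅` (efficiency of the Shapley value), so `v ∅ ≤ v a`.
-/

open Finset

variable {m : ℕ}

noncomputable def shapleyWeight (n k : ℕ) : ℝ :=
  (k.factorial * (n - k - 1).factorial : ℝ) / n.factorial

lemma shapleyWeight_mul_sub {n k : ℕ} (hk : k < n) :
    shapleyWeight n k * (n - k : ℕ) = (n.choose k : ℝ)⁻¹ := by
  rw [shapleyWeight, Nat.cast_choose ℝ hk.le, inv_div,
    ← Nat.mul_factorial_pred (by omega : n - k ≠ 0)]
  push_cast
  ring

lemma shapleyWeight_mul_succ {n k : ℕ} (hk : k < n) :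
    shapleyWeight n k * (k + 1 : ℕ) = (n.choose (k + 1) : ℝ)⁻¹ := by
  rw [shapleyWeight, Nat.cast_choose ℝ hk, inv_div, Nat.factorial_succ,
    show n - k - 1 = n - (k + 1) by omega]
  push_cast
  ring

section CooperativeGame

variable {α : Type*} [Fintype α] [DecidableEq α]

lemma sum_powerset_erase_insert {M : Type*} [AddCommMonoid M] (t : α) (g : Finset α → M) :
    ∑ J ∈ (univ.erase t).powerset, g (insert t J) = ∑ S with t ∈ S, g S :=
  sum_nbij' (insert t) (erase · t) (by simp) (by simp [subset_erase])
    (fun J hJ => erase_insert (by simp_all [subset_erase]))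
    (fun S hS => insert_erase (by simpa using hS)) (fun _ _ => rfl)

noncomputable def shapleyValue (f : Finset α → ℝ) (t : α) : ℝ :=
  ∑ J ∈ (univ.erase t).powerset, shapleyWeight (Fintype.card α) J.card * (f (insert t J) - f J)

/- Grouping by coalition `S`, the coefficient of `f S` is
`|S| * shapleyWeight n (|S| - 1) - (n - |S|) * shapleyWeight n |S|`. Both terms equal
`1 / choose n |S|`, except that the first vanishes at `S = ∅` and the second at `S = univ`,
so the sum telescopes to `f univ - f ∅`. -/
theorem sum_shapleyValue (f : Finset α → ℝ) : ∑ t, shapleyValue f t = f univ - f ∅ := by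
  set n := Fintype.card α
  set g : Finset α → ℝ := fun S => (n.choose S.card : ℝ)⁻¹ * f S
  have joining : ∑ t, ∑ J ∈ (univ.erase t).powerset, shapleyWeight n J.card * f (insert t J)
      = ∑ S ∈ univ.erase ∅, g S := by
    calc _ = ∑ t, ∑ S with t ∈ S, shapleyWeight n (S.card - 1) * f S := by
          refine sum_congr rfl fun t _ => ?_
          rw [← sum_powerset_erase_insert]
          refine sum_congr rfl fun J hJ => ?_
          rw [card_insert_of_notMem (by simpa [subset_erase] using hJ), Nat.add_sub_cancel]
      _ = ∑ S ∈ univ.erase ∅, ∑ t ∈ S, shapleyWeight n (S.card - 1) * f S := by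
          refine sum_comm' fun t S => ?_
          simp only [mem_univ, mem_filter, mem_erase, true_and, and_true]
          exact ⟨fun h => ⟨h, ne_empty_of_mem h⟩, And.left⟩
      _ = ∑ S ∈ univ.erase ∅, g S := by
          refine sum_congr rfl fun S hS => ?_
          obtain ⟨k, hk⟩ : ∃ k, S.card = k + 1 :=
            Nat.exists_eq_succ_of_ne_zero
              (card_ne_zero.2 (nonempty_iff_ne_empty.2 (ne_of_mem_erase hS)))
          have hkn : k < n := by have := card_le_univ S; omega
          rw [sum_const, nsmul_eq_mul, ← mul_assoc, mul_comm _ (shapleyWeight _ _), hk,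
            Nat.add_sub_cancel, shapleyWeight_mul_succ hkn, ← hk]
  have leaving : ∑ t, ∑ J ∈ (univ.erase t).powerset, shapleyWeight n J.card * f J
      = ∑ S ∈ univ.erase univ, g S := by
    rw [sum_comm' (t' := univ.erase univ) (s' := fun J => Jᶜ)]
    · refine sum_congr rfl fun J hJ => ?_
      have hJn : J.card < n := (card_lt_iff_ne_univ J).2 (ne_of_mem_erase hJ)
      rw [sum_const, card_compl, nsmul_eq_mul, ← mul_assoc, mul_comm _ (shapleyWeight _ _),
        shapleyWeight_mul_sub hJn]
    · intro t J
      simp only [mem_univ, mem_powerset, subset_erase, mem_compl, mem_erase]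
      exact ⟨fun h => ⟨h.2.2, fun hJ => h.2.2 (hJ ▸ mem_univ t), trivial⟩,
        fun h => ⟨trivial, subset_univ J, h.1⟩⟩
  have hg_empty : g ∅ = f ∅ := by simp [g]
  have hg_univ : g univ = f univ := by simp [g, n]
  have split_empty := add_sum_erase univ g (mem_univ ∅)
  have split_univ := add_sum_erase univ g (mem_univ univ)
  simp only [shapleyValue, mul_sub, sum_sub_distrib]
  rw [joining, leaving]
  linarith

end CooperativeGame

section ShapleyGame

variable {A : Fin m → Type*} (null : ∀ t, A t)

lemma restrictProfile_univ (a : ∀ t, A t) : restrictProfile null a univ = a := by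
  funext s
  simp [restrictProfile]

lemma restrictProfile_empty (a : ∀ t, A t) : restrictProfile null a ∅ = null := by
  funext s
  simp [restrictProfile]

lemma restrictProfile_insert_of_eq_null {a : ∀ t, A t} {t : Fin m} (ht : a t = null t)
    (J : Finset (Fin m)) : restrictProfile null a (insert t J) = restrictProfile null a J := by
  funext s
  by_cases hs : s = t
  · subst hs
    simp [restrictProfile, ht]
  · simp [restrictProfile, hs]

lemma shapleySub_eq_shapleyValue (v : (∀ t, A t) → ℝ) (a : ∀ t, A t) (t : Fin m) :
    shapleySub null v a t = shapleyValue (fun J => v (restrictProfile null a J)) t := by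
  rw [shapleyValue, Fintype.card_fin]
  rfl

lemma shapleySub_eq_zero_of_eq_null (v : (∀ t, A t) → ℝ) {a : ∀ t, A t} {t : Fin m}
    (ht : a t = null t) : shapleySub null v a t = 0 :=
  sum_eq_zero fun J _ => by rw [restrictProfile_insert_of_eq_null null ht, sub_self, mul_zero]

lemma sum_shapleySub (v : (∀ t, A t) → ℝ) (a : ∀ t, A t) :
    ∑ t, shapleySub null v a t = v a - v null := by
  simp only [shapleySub_eq_shapleyValue, sum_shapleyValue, restrictProfile_univ,
    restrictProfile_empty]

end ShapleyGame

/-- In any pure Nash equilibrium `a` of the game with Shapley payments,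
`v(a) ≥ v(∅)`, where `∅` is the all-null strategy profile. -/
theorem shapley_nash_value_ge_null {A : Fin m → Type*} (null : ∀ t, A t)
    (v : (∀ t, A t) → ℝ) (a : ∀ t, A t)
    (hNE : ∀ (t : Fin m) (a' : A t),
      shapleySub null v (Function.update a t a') t ≤ shapleySub null v a t) :
    v null ≤ v a := by
  have payment_nonneg : ∀ t, 0 ≤ shapleySub null v a t := fun t =>
    (shapleySub_eq_zero_of_eq_null null v (Function.update_self t (null t) a)).symm.le.trans
      (hNE t (null t))
  have total_nonneg : 0 ≤ ∑ t, shapleySub null v a t := sum_nonneg fun t _ => payment_nonneg t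
  rw [sum_shapleySub] at total_nonneg
  linarith
end

section
/- For any joint partition P of the item set I, the revenue satisfies R(P) ≤ |P| · max_{S∈P} μ(S)·v(S) ≤ n · R({I}), where n = |I|. In particular, the trivial partition {I} is an n-approximation to the revenue-maximizing joint partition. -/
open Finset

/-- The second-highest value of `f` over a finite type (0 if fewer than two indices),
computed as the maximum over pairs of distinct indices of the minimum of the two values. -/
noncomputable def secondMax {B : Type*} [Fintype B] [DecidableEq B] (f : B → ℝ) : ℝ :=
  ((Finset.univ ×ˢ Finset.univ).filter (fun p : B × B => p.1 ≠ p.2)).fold max 0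
    (fun p => min (f p.1) (f p.2))

/-- The contribution `μ(S)·v(S)` of a part `S`: the second-highest, over bidders `i`,
of `Σ_{j∈S} μ j · vals i j`. -/
noncomputable def partVal {I B : Type*} [Fintype B] [DecidableEq B]
    (μ : I → ℝ) (vals : B → I → ℝ) (S : Finset I) : ℝ :=
  secondMax (fun i => ∑ j ∈ S, μ j * vals i j)

/-- The revenue of a collection of parts. -/
noncomputable def revenue {I B : Type*} [Fintype B] [DecidableEq B]
    (μ : I → ℝ) (vals : B → I → ℝ) (P : Finset (Finset I)) : ℝ :=
  ∑ S ∈ P, partVal μ vals S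

/-- `P` is a partition of the whole item set. -/
def IsPartition {I : Type*} (P : Finset (Finset I)) : Prop :=
  (∀ j : I, ∃ S ∈ P, j ∈ S) ∧
  (∀ S ∈ P, ∀ T ∈ P, S ≠ T → Disjoint S T) ∧
  (∅ : Finset I) ∉ P

lemma secondMax_nonneg {B : Type*} [Fintype B] [DecidableEq B] (f : B → ℝ) :
    0 ≤ secondMax f := by
  unfold secondMax
  rw [Finset.le_fold_max]
  exact Or.inl le_rfl

lemma secondMax_mono {B : Type*} [Fintype B] [DecidableEq B] {f g : B → ℝ}
    (h : ∀ i, f i ≤ g i) : secondMax f ≤ secondMax g := by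
  unfold secondMax
  rw [Finset.fold_max_le]
  refine ⟨secondMax_nonneg g, fun p hp => ?_⟩
  rw [Finset.le_fold_max]
  exact Or.inr ⟨p, hp, min_le_min (h p.1) (h p.2)⟩

/-- The revenue of any partition is at most its number of parts times the maximum part
contribution, which in turn is at most `n` times the revenue of the trivial partition
`{I}`; hence silence is an `n`-approximation. -/
theorem revenue_le_card_mul_sup_le_n_mul_trivial {I B : Type*} [Fintype I] [DecidableEq I]
    [Fintype B] [DecidableEq B] (μ : I → ℝ) (vals : B → I → ℝ)
    (hμ : ∀ j, 0 ≤ μ j) (hv : ∀ i j, 0 ≤ vals i j)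
    (P : Finset (Finset I)) (hP : IsPartition P) (hPne : P.Nonempty) :
    revenue μ vals P ≤ (P.card : ℝ) * P.sup' hPne (partVal μ vals) ∧
    (P.card : ℝ) * P.sup' hPne (partVal μ vals) ≤
      (Fintype.card I : ℝ) * revenue μ vals {(Finset.univ : Finset I)} := by
  obtain ⟨hcov, hdisj, hnemp⟩ := hP
  have hpartle : ∀ S : Finset I, partVal μ vals S ≤ partVal μ vals Finset.univ := by
    intro S
    apply secondMax_mono
    intro i
    apply Finset.sum_le_sum_of_subset_of_nonneg (Finset.subset_univ S)
    intro j _ _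
    exact mul_nonneg (hμ j) (hv i j)
  have hsup : P.sup' hPne (partVal μ vals) ≤ partVal μ vals Finset.univ :=
    Finset.sup'_le _ _ fun S _ => hpartle S
  have hcard : P.card ≤ Fintype.card I := by
    have h1 : ∀ S ∈ P, 1 ≤ S.card := by
      intro S hS
      rw [Nat.one_le_iff_ne_zero, Ne, Finset.card_eq_zero]
      rintro rfl; exact hnemp hS
    calc P.card = ∑ S ∈ P, 1 := by simp
      _ ≤ ∑ S ∈ P, S.card := Finset.sum_le_sum h1
      _ = (P.biUnion id).card := (Finset.card_biUnion (fun S hS T hT h => hdisj S hS T hT h)).symm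
      _ ≤ Fintype.card I := Finset.card_le_univ _
  have hpv0 : 0 ≤ partVal μ vals Finset.univ := secondMax_nonneg _
  constructor
  · calc revenue μ vals P = ∑ S ∈ P, partVal μ vals S := rfl
      _ ≤ ∑ _S ∈ P, P.sup' hPne (partVal μ vals) :=
          Finset.sum_le_sum fun S hS => Finset.le_sup' _ hS
      _ = (P.card : ℝ) * P.sup' hPne (partVal μ vals) := by
          rw [Finset.sum_const, nsmul_eq_mul]
  · have hrev : revenue μ vals {(Finset.univ : Finset I)} = partVal μ vals Finset.univ := by
      simp [revenue]
    rw [hrev]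
    have hsup0 : P.sup' hPne (partVal μ vals) ≤ partVal μ vals Finset.univ := hsup
    calc (P.card : ℝ) * P.sup' hPne (partVal μ vals)
        ≤ (P.card : ℝ) * partVal μ vals Finset.univ := by
          apply mul_le_mul_of_nonneg_left hsup0 (by positivity)
      _ ≤ (Fintype.card I : ℝ) * partVal μ vals Finset.univ := by
          apply mul_le_mul_of_nonneg_right _ hpv0
          exact_mod_cast hcard
end

section
/- For any partition P of the item set I into parts, R(P) ≤ (k−1) · R({I}), where k ≥ 2 is the number of bidders. That is, the trivial partition {I} is a (k−1)-approximation to the optimal revenue. -/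
open Finset

/-- With `k ≥ 2` bidders, the revenue of any partition is at most `(k-1)` times the
revenue of the trivial partition `{I}`: silence is a `(k-1)`-approximation. -/
theorem revenue_le_k_sub_one_mul_trivial {I B : Type*} [Fintype I] [DecidableEq I]
    [Fintype B] [DecidableEq B] (μ : I → ℝ) (vals : B → I → ℝ)
    (hμ : ∀ j, 0 ≤ μ j) (hv : ∀ i j, 0 ≤ vals i j)
    (hk : 2 ≤ Fintype.card B)
    (P : Finset (Finset I)) (hP : IsPartition P) :
    revenue μ vals P ≤
      ((Fintype.card B : ℝ) - 1) * revenue μ vals {(Finset.univ : Finset I)} := by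
  obtain ⟨hcov, hdisj, -⟩ := hP
  set g : B → ℝ := fun i => ∑ j, μ j * vals i j with hg
  have hB : (Finset.univ : Finset B).Nonempty := by
    rw [← Finset.card_pos, Finset.card_univ]; omega
  obtain ⟨i₀, -, hi₀⟩ := Finset.exists_max_image Finset.univ g hB
  have hs : ∀ (i : B) (S : Finset I), 0 ≤ ∑ j ∈ S, μ j * vals i j := fun i S =>
    Finset.sum_nonneg fun j _ => mul_nonneg (hμ j) (hv i j)
  have hle : ∀ i, i ≠ i₀ → g i ≤ secondMax g := by
    intro i hi
    unfold secondMax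
    rw [Finset.le_fold_max]
    right
    refine ⟨(i, i₀), by simp [hi], le_min le_rfl (hi₀ i (Finset.mem_univ i))⟩
  have key : ∀ S ∈ P, partVal μ vals S ≤
      ∑ i ∈ Finset.univ.erase i₀, ∑ j ∈ S, μ j * vals i j := by
    intro S _
    unfold partVal secondMax
    rw [Finset.fold_max_le]
    refine ⟨Finset.sum_nonneg fun i _ => hs i S, ?_⟩
    rintro ⟨a, b⟩ hp
    simp only [Finset.mem_filter] at hp
    have hab : a ≠ b := hp.2
    rcases ne_or_eq a i₀ with h | h
    · exact le_trans (min_le_left _ _) (Finset.single_le_sum (fun i _ => hs i S)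
        (Finset.mem_erase.2 ⟨h, Finset.mem_univ a⟩))
    · have hb : b ≠ i₀ := by rintro rfl; exact hab h
      exact le_trans (min_le_right _ _) (Finset.single_le_sum (fun i _ => hs i S)
        (Finset.mem_erase.2 ⟨hb, Finset.mem_univ b⟩))
  have sumP : ∀ i : B, ∑ S ∈ P, ∑ j ∈ S, μ j * vals i j = g i := by
    intro i
    have hU : P.biUnion id = Finset.univ := by
      apply Finset.eq_univ_iff_forall.mpr
      intro j; obtain ⟨S, hS, hjS⟩ := hcov j
      exact Finset.mem_biUnion.2 ⟨S, hS, hjS⟩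
    rw [hg]
    show _ = ∑ j : I, μ j * vals i j
    rw [← hU]
    exact (Finset.sum_biUnion fun S hS T hT hST => hdisj S hS T hT hST).symm
  have hrev : revenue μ vals {(Finset.univ : Finset I)} = secondMax g := by
    simp [revenue, partVal, hg]
  calc revenue μ vals P
      ≤ ∑ S ∈ P, ∑ i ∈ Finset.univ.erase i₀, ∑ j ∈ S, μ j * vals i j :=
        Finset.sum_le_sum key
    _ = ∑ i ∈ Finset.univ.erase i₀, ∑ S ∈ P, ∑ j ∈ S, μ j * vals i j := Finset.sum_comm
    _ = ∑ i ∈ Finset.univ.erase i₀, g i := Finset.sum_congr rfl fun i _ => sumP i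
    _ ≤ ∑ _i ∈ Finset.univ.erase i₀, secondMax g :=
        Finset.sum_le_sum fun i hi => hle i (Finset.ne_of_mem_erase hi)
    _ = ((Fintype.card B : ℝ) - 1) * secondMax g := by
        rw [Finset.sum_const, Finset.card_erase_of_mem (Finset.mem_univ i₀),
          Finset.card_univ, nsmul_eq_mul]
        congr 1
        have : 1 ≤ Fintype.card B := by omega
        push_cast [Nat.cast_sub this]
        ring
    _ = _ := by rw [hrev]
end

section
/- In the independent-set reduction DSP instance, for any set S of mediators, letting S' = {m_{v,k} ∈ S : no neighbor u of v has a mediator m_{u,k'} ∈ S}, the joint-partition revenue satisfies R(×_{m_{v,k}∈S} P_{v,k}) ≤ |S'| + N + 1. -/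
open Finset

/-- Items of the reduction instance: `Sum.inl (v,k)` is the non-helper item `j_{v,k}`,
`Sum.inr (v,k)` is the helper item `j'_{v,k}`. -/
abbrev RItem (V : Type*) (ℓ : ℕ) := (V × Fin ℓ) ⊕ (V × Fin ℓ)

/-- Bidders of the reduction instance: `Sum.inl (v,k)` is the single-minded bidder
`i_{v,k}`, and `Sum.inr ()` is the helper bidder `i_h`. -/
abbrev RBidder (V : Type*) (ℓ : ℕ) := (V × Fin ℓ) ⊕ Unit

/-- The uniform prior on the `2ℓN` items. -/
noncomputable def redμ (V : Type*) [Fintype V] (ℓ : ℕ) : RItem V ℓ → ℝ :=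
  fun _ => 1 / (2 * ℓ * Fintype.card V : ℝ)

/-- Valuations of the reduction instance: `i_{v,k}` values `j_{v,k}` at `2ℓN`, and
`i_h` values each helper item at `2ℓN`. -/
def redVals (V : Type*) [Fintype V] [DecidableEq V] (ℓ : ℕ) :
    RBidder V ℓ → RItem V ℓ → ℝ
  | Sum.inl p, Sum.inl q => if p = q then (2 * ℓ * Fintype.card V : ℝ) else 0
  | Sum.inl _, Sum.inr _ => 0
  | Sum.inr _, Sum.inl _ => 0
  | Sum.inr _, Sum.inr _ => (2 * ℓ * Fintype.card V : ℝ)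

/-- The informative part of mediator `m_{v,k}`'s binary partition:
`{j_{v,k}, j'_{v,k}} ∪ ⋃_{u : uv ∈ E} H_u`. -/
def medPart {V : Type*} [Fintype V] [DecidableEq V] {ℓ : ℕ}
    (G : SimpleGraph V) [DecidableRel G.Adj] (v : V) (k : Fin ℓ) :
    Finset (RItem V ℓ) :=
  Finset.univ.filter (fun x =>
    x = Sum.inl (v, k) ∨ x = Sum.inr (v, k) ∨
    ∃ u : V, ∃ k' : Fin ℓ, G.Adj u v ∧ x = Sum.inr (u, k'))

/-- The joint partition induced by the set `S` of speaking mediators: two items are in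
the same part iff they are not separated by any mediator of `S`. -/
def jointOf {V : Type*} [Fintype V] [DecidableEq V] {ℓ : ℕ}
    (G : SimpleGraph V) [DecidableRel G.Adj] (S : Finset (V × Fin ℓ)) :
    Finset (Finset (RItem V ℓ)) :=
  Finset.univ.image (fun x : RItem V ℓ =>
    Finset.univ.filter (fun y =>
      ∀ p ∈ S, (y ∈ medPart G p.1 p.2 ↔ x ∈ medPart G p.1 p.2)))

/-!
A part of the joint partition earns revenue only if two bidders value it positively. Every
bidder other than `i_h` is a single-minded `i_{v,k}` whose value for a part is at most 1 and is 0
unless the part contains `j_{v,k}`; so a part contributes at most 1, and only when it has a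
non-helper item and at least two items. Parts are the fibres of the signature `x ↦ {m ∈ S : x ∈ P_m}`.
A non-helper item `j_{v,k}` has signature `∅` or `{m_{v,k}}`; if its part has a second item, that is
a helper item `j'_{u,k'}` of signature `{m_{v,k}}`. When `m_{v,k} ∉ S'`, this forces `u ≠ v` and
makes `m_{v,k}` the only mediator of `S` at a neighbour of `u`, so `m_{v,k}` is determined by `u`.
Hence at most `1 + |S'| + N` signatures carry revenue.
-/

theorem secondMax_le_of_forall_ne_le {B : Type*} [Fintype B] [DecidableEq B] {f : B → ℝ}
    {c : ℝ} (hc : 0 ≤ c) (b₀ : B) (h : ∀ b, b ≠ b₀ → f b ≤ c) : secondMax f ≤ c := by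
  rw [secondMax, fold_max_le]
  refine ⟨hc, fun p hp => ?_⟩
  have hne : p.1 ≠ p.2 := (mem_filter.mp hp).2
  by_cases h₁ : p.1 = b₀
  · exact (min_le_right _ _).trans (h _ fun h₂ => hne (h₁.trans h₂.symm))
  · exact (min_le_left _ _).trans (h _ h₁)

section Bids

variable {V : Type*} [Fintype V] [DecidableEq V] {ℓ : ℕ}

noncomputable def redBid (T : Finset (RItem V ℓ)) (i : RBidder V ℓ) : ℝ :=
  ∑ j ∈ T, redμ V ℓ j * redVals V ℓ i j

theorem partVal_red_eq (T : Finset (RItem V ℓ)) :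
    partVal (redμ V ℓ) (redVals V ℓ) T = secondMax (redBid T) := rfl

theorem redVals_inl (p : V × Fin ℓ) (j : RItem V ℓ) :
    redVals V ℓ (.inl p) j = if j = .inl p then (2 * ℓ * Fintype.card V : ℝ) else 0 := by
  rcases j with q | q <;> simp [redVals, eq_comm]

theorem redBid_inl (T : Finset (RItem V ℓ)) (p : V × Fin ℓ) :
    redBid T (.inl p) =
      if .inl p ∈ T then redμ V ℓ (.inl p) * (2 * ℓ * Fintype.card V : ℝ) else 0 := by
  simp only [redBid, redVals_inl, mul_ite, mul_zero]
  exact sum_ite_eq' T _ _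

theorem redBid_inl_le_one (T : Finset (RItem V ℓ)) (p : V × Fin ℓ) : redBid T (.inl p) ≤ 1 := by
  rw [redBid_inl]
  split_ifs
  · simp only [redμ]
    -- `redμ` is `1 / 0 = 0` when `ℓ = 0` or `V` is empty
    rcases eq_or_ne (2 * ℓ * Fintype.card V : ℝ) 0 with h | h
    · simp [h]
    · rw [one_div_mul_cancel h]
  · exact zero_le_one

theorem redBid_inl_of_notMem {T : Finset (RItem V ℓ)} {p : V × Fin ℓ} (h : .inl p ∉ T) :
    redBid T (.inl p) = 0 := by
  simp [redBid_inl, h]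

def Contributes (T : Finset (RItem V ℓ)) : Prop :=
  (∃ p, .inl p ∈ T) ∧ 2 ≤ T.card

instance : DecidablePred (Contributes (V := V) (ℓ := ℓ)) :=
  fun T => inferInstanceAs (Decidable ((∃ p, .inl p ∈ T) ∧ 2 ≤ T.card))

theorem partVal_red_le (T : Finset (RItem V ℓ)) :
    partVal (redμ V ℓ) (redVals V ℓ) T ≤ if Contributes T then 1 else 0 := by
  rw [partVal_red_eq]
  split_ifs with hT
  · exact secondMax_le_of_forall_ne_le zero_le_one (.inr ()) fun b hb => by
      rcases b with q | ⟨⟨⟩⟩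
      · exact redBid_inl_le_one T q
      · exact absurd rfl hb
  by_cases hinl : ∃ p, .inl p ∈ T
  · obtain ⟨p, hp⟩ := hinl
    have hT : T = {.inl p} :=
      eq_singleton_iff_unique_mem.mpr ⟨hp, fun y hy =>
        card_le_one.mp (Nat.le_of_lt_succ (not_le.mp fun h => hT ⟨⟨p, hp⟩, h⟩)) y hy _ hp⟩
    refine secondMax_le_of_forall_ne_le le_rfl (.inl p) fun b hb => ?_
    rcases b with q | ⟨⟨⟩⟩
    · rw [redBid_inl_of_notMem (by simpa [hT] using hb)]
    · simp [hT, redBid, redVals]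
  · push Not at hinl
    exact secondMax_le_of_forall_ne_le le_rfl (.inr ()) fun b hb => by
      rcases b with q | ⟨⟨⟩⟩
      · exact (redBid_inl_of_notMem (hinl q)).le
      · exact absurd rfl hb

theorem revenue_red_le_card_filter_contributes (P : Finset (Finset (RItem V ℓ))) :
    revenue (redμ V ℓ) (redVals V ℓ) P ≤ (P.filter Contributes).card :=
  calc revenue (redμ V ℓ) (redVals V ℓ) P
      ≤ ∑ T ∈ P, if Contributes T then (1 : ℝ) else 0 := sum_le_sum fun T _ => partVal_red_le T
    _ = (P.filter Contributes).card := sum_boole _ _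

end Bids

section Signatures

variable {V : Type*} [Fintype V] [DecidableEq V] {ℓ : ℕ}
  (G : SimpleGraph V) [DecidableRel G.Adj] (S : Finset (V × Fin ℓ))

def medSig (x : RItem V ℓ) : Finset (V × Fin ℓ) :=
  S.filter fun p => x ∈ medPart G p.1 p.2

def sigFiber (s : Finset (V × Fin ℓ)) : Finset (RItem V ℓ) :=
  univ.filter fun y => medSig G S y = s

def neighborMeds (w : V) : Finset (V × Fin ℓ) :=
  S.filter fun q => G.Adj w q.1

def isolatedMeds : Finset (V × Fin ℓ) :=
  S.filter fun p => ∀ q ∈ S, ¬ G.Adj q.1 p.1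

theorem jointOf_eq_image_sigFiber :
    jointOf G S = univ.image fun x => sigFiber G S (medSig G S x) := by
  refine image_congr fun x _ => ?_
  ext y
  simp only [sigFiber, medSig, mem_filter, mem_univ, true_and, Finset.ext_iff]
  exact forall_congr' fun p => by tauto

theorem medSig_inl (p : V × Fin ℓ) : medSig G S (.inl p) = if p ∈ S then {p} else ∅ := by
  rw [← filter_eq]
  exact filter_congr fun q _ => by simp [medPart]

theorem medSig_inr (r : V × Fin ℓ) :
    medSig G S (.inr r) = S.filter fun q => q = r ∨ G.Adj r.1 q.1 := by
  refine filter_congr fun q _ => ?_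
  simp only [medPart, mem_filter, mem_univ, true_and, reduceCtorEq, false_or, Sum.inr.injEq]
  constructor
  · rintro (rfl | ⟨u, k, hu, rfl⟩)
    exacts [Or.inl rfl, Or.inr hu]
  · rintro (rfl | h)
    exacts [Or.inl rfl, Or.inr ⟨r.1, r.2, h, rfl⟩]

theorem neighborMeds_eq_singleton {p r : V × Fin ℓ} (hp : p ∉ isolatedMeds G S)
    (hr : medSig G S (.inr r) = {p}) : neighborMeds G S r.1 = {p} := by
  rw [medSig_inr] at hr
  have hpS : p ∈ S := (mem_filter.mp (hr ▸ mem_singleton_self p)).1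
  obtain ⟨q, hqS, hqp⟩ : ∃ q ∈ S, G.Adj q.1 p.1 := by
    simpa [isolatedMeds, hpS] using hp
  have hrp : r ≠ p := by
    rintro rfl
    have hq : q ∈ ({r} : Finset _) := hr ▸ mem_filter.mpr ⟨hqS, Or.inr hqp.symm⟩
    rw [mem_singleton.mp hq] at hqp
    exact G.irrefl hqp
  have hadj : G.Adj r.1 p.1 :=
    ((mem_filter.mp (hr ▸ mem_singleton_self p)).2).resolve_left (Ne.symm hrp)
  refine Subset.antisymm (fun q hq => ?_) (singleton_subset_iff.mpr (mem_filter.mpr ⟨hpS, hadj⟩))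
  rw [← hr]
  exact mem_filter.mpr ⟨(mem_filter.mp hq).1, Or.inr (mem_filter.mp hq).2⟩

def contributingSigs : Finset (Finset (V × Fin ℓ)) :=
  insert ∅ ((isolatedMeds G S).image singleton ∪ univ.image (neighborMeds G S))

theorem card_contributingSigs_le :
    (contributingSigs G S).card ≤ (isolatedMeds G S).card + Fintype.card V + 1 :=
  calc (contributingSigs G S).card
      ≤ ((isolatedMeds G S).image singleton ∪ univ.image (neighborMeds G S)).card + 1 :=
        card_insert_le _ _
    _ ≤ (isolatedMeds G S).card + Fintype.card V + 1 := by
        gcongr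
        exact (card_union_le _ _).trans (add_le_add card_image_le card_image_le)

theorem mem_contributingSigs {s : Finset (V × Fin ℓ)} (h : Contributes (sigFiber G S s)) :
    s ∈ contributingSigs G S := by
  obtain ⟨⟨p, hp⟩, hcard⟩ := h
  have hsp : s = medSig G S (.inl p) := ((mem_filter.mp hp).2).symm
  rw [hsp, medSig_inl]
  split_ifs with hpS
  swap
  · exact mem_insert_self _ _
  refine mem_insert_of_mem (mem_union.mpr ?_)
  by_cases hiso : p ∈ isolatedMeds G S
  · exact Or.inl (mem_image_of_mem _ hiso)
  obtain ⟨y, hy, hyp⟩ := exists_mem_ne (by omega : 1 < (sigFiber G S s).card) (.inl p)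
  have hys : medSig G S y = {p} := by
    rw [(mem_filter.mp hy).2, hsp, medSig_inl, if_pos hpS]
  rcases y with q | r
  · rw [medSig_inl] at hys
    split_ifs at hys
    · exact absurd (by rw [singleton_inj.mp hys]) hyp
    · exact absurd hys.symm (singleton_ne_empty p)
  · exact Or.inr (mem_image.mpr ⟨r.1, mem_univ _, neighborMeds_eq_singleton G S hiso hys⟩)

theorem card_filter_contributes_jointOf_le :
    ((jointOf G S).filter Contributes).card ≤ (contributingSigs G S).card := by
  refine (card_le_card (t := (contributingSigs G S).image (sigFiber G S)) fun T hT => ?_).trans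
    card_image_le
  obtain ⟨hTP, hT⟩ := mem_filter.mp hT
  rw [jointOf_eq_image_sigFiber] at hTP
  obtain ⟨x, -, rfl⟩ := mem_image.mp hTP
  exact mem_image_of_mem _ (mem_contributingSigs G S hT)

end Signatures

theorem red_revenue_upper_bound_general {V : Type*} [Fintype V] [DecidableEq V] {ℓ : ℕ}
    (G : SimpleGraph V) [DecidableRel G.Adj] (S : Finset (V × Fin ℓ)) :
    revenue (redμ V ℓ) (redVals V ℓ) (jointOf G S) ≤
      ((S.filter (fun p => ∀ q ∈ S, ¬ G.Adj q.1 p.1)).card : ℝ) +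
        (Fintype.card V : ℝ) + 1 := by
  have hcount := (card_filter_contributes_jointOf_le G S).trans (card_contributingSigs_le G S)
  calc revenue (redμ V ℓ) (redVals V ℓ) (jointOf G S)
      ≤ ((jointOf G S).filter Contributes).card := revenue_red_le_card_filter_contributes _
    _ ≤ (((isolatedMeds G S).card + Fintype.card V + 1 : ℕ) : ℝ) := by exact_mod_cast hcount
    _ = _ := by push_cast; rfl

/-- For any set `S` of speaking mediators, with `S'` the mediators of `S` whose node has
no neighbor with a mediator in `S`, the joint-partition revenue is at most
`|S'| + N + 1`. -/
theorem red_revenue_upper_bound {V : Type*} [Fintype V] [DecidableEq V] {ℓ : ℕ}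
    (hℓ : 1 ≤ ℓ) (hV : 1 ≤ Fintype.card V)
    (G : SimpleGraph V) [DecidableRel G.Adj] (S : Finset (V × Fin ℓ)) :
    revenue (redμ V ℓ) (redVals V ℓ) (jointOf G S) ≤
      ((S.filter (fun p => ∀ q ∈ S, ¬ G.Adj q.1 p.1)).card : ℝ) +
        (Fintype.card V : ℝ) + 1 :=
  red_revenue_upper_bound_general G S
end
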